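/- arXiv:2011.00983 — 3 statements merged into one kernel-verified Lean document; each statement's English description precedes it below -/
import Mathlib

section
/- Self-loop elimination in a Markov chain preserves reachability probabilities: if state s has a self-loop with probability r < 1 and outgoing probabilities q_j to states t_j ≠ s with r + ∑_j q_j = 1, then replacing the transition function at s by probabilities q_j/(1−r) to the t_j (and no self-loop) yields a Markov chain in which the probability of eventually reaching any set G of states not containing s, from any state, is unchanged. -/
/-- A stochastic transition function on a finite state space. -/
def IsStochastic {S : Type*} [Fintype S] (P : S → S → ℝ) : Prop :=
  (∀ s t, 0 ≤ P s t) ∧ ∀ s, ∑ t, P s t = 1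

/-- h is the least fixed point characterizing the reachability probabilities of G
    in the Markov chain P: h s = 1 for s ∈ G, h s = ∑ t, P s t * h t otherwise,
    and h is below every nonnegative solution. -/
def IsReachLFP {S : Type*} [Fintype S] (P : S → S → ℝ) (G : Set S) (h : S → ℝ) : Prop :=
  (∀ s, 0 ≤ h s) ∧ (∀ s ∈ G, h s = 1) ∧ (∀ s ∉ G, h s = ∑ t, P s t * h t) ∧
  ∀ g : S → ℝ, (∀ s, 0 ≤ g s) → (∀ s ∈ G, g s = 1) →
    (∀ s ∉ G, g s = ∑ t, P s t * g t) → ∀ s, h s ≤ g s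

/-- Self-loop elimination preserves reachability probabilities: if s has a self-loop
    of probability r = P s s < 1 and the chain is modified at s by removing the
    self-loop and rescaling all other outgoing probabilities by (1−r)⁻¹, the result
    is again a Markov chain, and reachability probabilities of any goal set G with
    s ∉ G are unchanged from every state. -/
theorem stmt2 {S : Type*} [Fintype S] [DecidableEq S]
    (P : S → S → ℝ) (hP : IsStochastic P) (s : S) (hloop : P s s < 1)
    (G : Set S) (hG : s ∉ G)
    (P' : S → S → ℝ)
    (hP's : ∀ t, P' s t = if t = s then 0 else P s t / (1 - P s s))
    (hP'u : ∀ u, u ≠ s → ∀ t, P' u t = P u t)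
    (h h' : S → ℝ) (hh : IsReachLFP P G h) (hh' : IsReachLFP P' G h') :
    IsStochastic P' ∧ h = h' := by
  obtain ⟨hPnn, hPsum⟩ := hP
  have hr : (0:ℝ) < 1 - P s s := by linarith
  have hr' : (1 - P s s) ≠ 0 := ne_of_gt hr
  have key : ∀ g : S → ℝ,
      ∑ t, P' s t * g t = (∑ t ∈ Finset.univ.erase s, P s t * g t) / (1 - P s s) := by
    intro g
    rw [← Finset.add_sum_erase _ (fun t => P' s t * g t) (Finset.mem_univ s),
      hP's s, if_pos rfl, zero_mul, zero_add, Finset.sum_div]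
    refine Finset.sum_congr rfl fun t ht => ?_
    rw [hP's t, if_neg (Finset.ne_of_mem_erase ht), div_mul_eq_mul_div]
  have herase : ∑ t ∈ Finset.univ.erase s, P s t = 1 - P s s := by
    have h1 := Finset.add_sum_erase Finset.univ (P s) (Finset.mem_univ s)
    have h2 := hPsum s
    linarith
  have hstoch : IsStochastic P' := by
    constructor
    · intro u t
      by_cases hu : u = s
      · subst hu; rw [hP's]
        split
        · exact le_refl 0
        · exact div_nonneg (hPnn _ _) hr.le
      · rw [hP'u u hu]; exact hPnn _ _
    · intro u
      by_cases hu : u = s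
      · subst hu
        have hk := key (fun _ => (1:ℝ))
        simp only [mul_one] at hk
        rw [hk, herase, div_self hr']
      · rw [Finset.sum_congr rfl fun t _ => hP'u u hu t]
        exact hPsum u
  have hs_eq : ∀ g : S → ℝ,
      (g s = ∑ t, P s t * g t) ↔ (g s = ∑ t, P' s t * g t) := by
    intro g
    rw [key g, ← Finset.add_sum_erase _ (fun t => P s t * g t) (Finset.mem_univ s),
      eq_div_iff hr']
    constructor <;> intro h1 <;> linear_combination h1
  have fpiff : ∀ g : S → ℝ,
      (∀ u ∉ G, g u = ∑ t, P u t * g t) ↔ (∀ u ∉ G, g u = ∑ t, P' u t * g t) := by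
    intro g
    have same : ∀ u, u ≠ s → ∑ t, P' u t * g t = ∑ t, P u t * g t :=
      fun u hu => Finset.sum_congr rfl fun t _ => by rw [hP'u u hu]
    constructor
    · intro H u huG
      by_cases hu : u = s
      · subst hu; exact (hs_eq g).mp (H u huG)
      · rw [same u hu]; exact H u huG
    · intro H u huG
      by_cases hu : u = s
      · subst hu; exact (hs_eq g).mpr (H u huG)
      · rw [← same u hu]; exact H u huG
  refine ⟨hstoch, funext fun u => le_antisymm ?_ ?_⟩
  · exact hh.2.2.2 h' hh'.1 hh'.2.1 ((fpiff h').mpr hh'.2.2.1) u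
  · exact hh'.2.2.2 h hh.1 hh.2.1 ((fpiff h).mp hh.2.2.1) u
end

section
/- State elimination in a Markov chain preserves reachability probabilities: let s be a state with no self-loop (P(s,s) = 0), s not initial and s ∉ G. Define a new chain on S ∖ {s} by P'(u,v) = P(u,v) + P(u,s)·P(s,v) for all u,v ≠ s. Then P' is stochastic on S ∖ {s}, and for every state u ≠ s the probability of reaching G from u is the same in both chains. -/
private lemma sum_subtype_ne {S : Type*} [Fintype S] [DecidableEq S] (s : S) (f : S → ℝ) :
    ∑ v : {u : S // u ≠ s}, f v.1 = (∑ v, f v) - f s := by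
  have h1 : ∑ v ∈ Finset.univ.erase s, f v = ∑ v : {u : S // u ≠ s}, f v.1 := by
    apply Finset.sum_subtype
    intro x
    simp
  have h2 : ∑ v ∈ Finset.univ.erase s, f v = (∑ v, f v) - f s := by
    rw [Finset.sum_erase_eq_sub (Finset.mem_univ s)]
  rw [← h1, h2]

/-- State elimination preserves reachability probabilities: if s has no self-loop
    and s ∉ G, the chain P' on S ∖ {s} defined by P'(u,v) = P(u,v) + P(u,s)·P(s,v)
    is stochastic, and reachability probabilities of G from every u ≠ s coincide. -/
theorem stmt3 {S : Type*} [Fintype S] [DecidableEq S]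
    (P : S → S → ℝ) (hP : IsStochastic P) (s : S) (hloop : P s s = 0)
    (G : Set S) (hG : s ∉ G)
    (P' : {u : S // u ≠ s} → {u : S // u ≠ s} → ℝ)
    (hP' : ∀ u v, P' u v = P u.1 v.1 + P u.1 s * P s v.1)
    (h : S → ℝ) (h' : {u : S // u ≠ s} → ℝ)
    (hh : IsReachLFP P G h)
    (hh' : IsReachLFP P' {u : {u : S // u ≠ s} | u.1 ∈ G} h') :
    IsStochastic P' ∧ ∀ u : {u : S // u ≠ s}, h u.1 = h' u := by
  obtain ⟨Ppos, Psum⟩ := hP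
  obtain ⟨h0, h1, hfix, hmin⟩ := hh
  obtain ⟨h'0, h'1, h'fix, h'min⟩ := hh'
  -- key: h s has no self contribution
  have hsG : s ∉ G := hG
  have hs_eq : h s = ∑ v : {u : S // u ≠ s}, P s v.1 * h v.1 := by
    rw [sum_subtype_ne s (fun v => P s v * h v), ← hfix s hsG, hloop, zero_mul, sub_zero]
  -- stochasticity of P'
  have stoch : IsStochastic P' := by
    constructor
    · intro u v
      rw [hP' u v]
      have := Ppos u.1 v.1
      have := Ppos u.1 s
      have := Ppos s v.1
      positivity
    · intro u
      have e1 : ∑ v : {u : S // u ≠ s}, P' u v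
          = (∑ v : {u : S // u ≠ s}, P u.1 v.1) + P u.1 s * ∑ v : {u : S // u ≠ s}, P s v.1 := by
        rw [Finset.mul_sum, ← Finset.sum_add_distrib]
        exact Finset.sum_congr rfl fun v _ => hP' u v
      rw [e1, sum_subtype_ne s (fun v => P u.1 v), sum_subtype_ne s (fun v => P s v),
        Psum u.1, Psum s, hloop]
      ring
  refine ⟨stoch, fun u => ?_⟩
  -- restricted h satisfies P' equations
  have hres : ∀ v : {u : S // u ≠ s}, v ∉ {u : {u : S // u ≠ s} | u.1 ∈ G} →
      h v.1 = ∑ w : {u : S // u ≠ s}, P' v w * h w.1 := by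
    intro v hv
    have hvG : v.1 ∉ G := hv
    have this2 := hfix v.1 hvG
    have e : ∑ w : {u : S // u ≠ s}, P' v w * h w.1
        = (∑ w : {u : S // u ≠ s}, P v.1 w.1 * h w.1)
          + P v.1 s * ∑ w : {u : S // u ≠ s}, P s w.1 * h w.1 := by
      rw [Finset.mul_sum, ← Finset.sum_add_distrib]
      refine Finset.sum_congr rfl fun w _ => ?_
      rw [hP' v w]; ring
    have key := sum_subtype_ne s (fun w => P v.1 w * h w)
    rw [e, ← hs_eq]
    linarith
  have le1 : h' u ≤ h u.1 :=
    h'min (fun v => h v.1) (fun v => h0 v.1) (fun v hv => h1 v.1 hv) hres u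
  -- extension of h' satisfies P equations
  set g : S → ℝ := fun v => if hv : v = s then ∑ w : {u : S // u ≠ s}, P s w.1 * h' w
    else h' ⟨v, hv⟩ with hg
  have gs : g s = ∑ w : {u : S // u ≠ s}, P s w.1 * h' w := by simp [hg]
  have gne : ∀ (v : S) (hv : v ≠ s), g v = h' ⟨v, hv⟩ := by
    intro v hv; simp [hg, hv]
  have gsum : ∀ v : S, ∑ t, P v t * g t
      = (∑ w : {u : S // u ≠ s}, P v w.1 * h' w) + P v s * g s := by
    intro v
    have := sum_subtype_ne s (fun t => P v t * g t)
    have e : ∀ w : {u : S // u ≠ s}, P v w.1 * g w.1 = P v w.1 * h' w := by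
      intro w; rw [gne w.1 w.2]
    rw [Finset.sum_congr rfl (fun w _ => e w)] at this
    linarith
  have gfix : ∀ v, v ∉ G → g v = ∑ t, P v t * g t := by
    intro v hv
    rcases eq_or_ne v s with rfl | hvs
    · rw [gsum, gs, hloop]; ring
    · rw [gsum, gne v hvs, gs]
      have hv' : (⟨v, hvs⟩ : {u : S // u ≠ s}) ∉ {u : {u : S // u ≠ s} | u.1 ∈ G} := hv
      have := h'fix ⟨v, hvs⟩ hv'
      rw [this]
      rw [Finset.mul_sum, ← Finset.sum_add_distrib]
      refine Finset.sum_congr rfl fun w _ => ?_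
      rw [hP' ⟨v, hvs⟩ w]; ring
  have g0 : ∀ v, 0 ≤ g v := by
    intro v
    rcases eq_or_ne v s with hvs | hvs
    · rw [hvs, gs]
      exact Finset.sum_nonneg fun w _ => mul_nonneg (Ppos s w.1) (h'0 w)
    · rw [gne v hvs]; exact h'0 _
  have g1 : ∀ v ∈ G, g v = 1 := by
    intro v hv
    have hvs : v ≠ s := by rintro rfl; exact hG hv
    rw [gne v hvs]
    exact h'1 ⟨v, hvs⟩ hv
  have le2 : h u.1 ≤ h' u := by
    have := hmin g g0 g1 gfix u.1
    rwa [gne u.1 u.2] at this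
  linarith
end

section
/- In the gambler's coin game Markov chain on states {0, 1, ..., N, N+1} (N ≥ 2 even) where from each state 1 ≤ x ≤ N−1 the chain moves to x−1 with probability 3/4 and to x+2 with probability 1/4, and states 0, N, N+1 are absorbing, the probability of reaching {N, N+1} from any state x with 0 < x < N is strictly less than x/N; in particular the game starting at N/2 is unfair (winning probability < 1/2). -/
/-!
The defect `d x = x / N - h x` vanishes at `0` and `N`, is positive at `N + 1`, and, since the
game loses `1/4` token per round on average, it is strictly superharmonic inside:
`d x = 3/4 d (x - 1) + 1/4 d (x + 2) + 1/(4N)`. A strictly superharmonic function on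
`{0, …, N + 1}` attains its minimum on the boundary `{0, N, N + 1}`, so `d` is positive inside.
-/

theorem pos_of_lt_weighted_mean {N : ℕ} {p : ℝ} (hp₀ : 0 ≤ p) (hp₁ : p ≤ 1) {d : ℕ → ℝ}
    (h₀ : 0 ≤ d 0) (hN : 0 ≤ d N) (hN₁ : 0 ≤ d (N + 1))
    (hmean : ∀ x, 0 < x → x < N → p * d (x - 1) + (1 - p) * d (x + 2) < d x)
    {x : ℕ} (hx₀ : 0 < x) (hxN : x < N) : 0 < d x := by
  obtain ⟨y, hy, hmin⟩ := (Finset.range (N + 2)).exists_min_image d ⟨0, by simp⟩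
  have hy_boundary : ¬ (0 < y ∧ y < N) := by
    rintro ⟨hy₀, hyN⟩
    have hleft := hmin (y - 1) (Finset.mem_range.mpr (by omega))
    have hright := hmin (y + 2) (Finset.mem_range.mpr (by omega))
    nlinarith [hmean y hy₀ hyN]
  have hdy : 0 ≤ d y := by
    obtain rfl | rfl | rfl : y = 0 ∨ y = N ∨ y = N + 1 := by
      have := Finset.mem_range.mp hy; omega
    exacts [h₀, hN, hN₁]
  have hnonneg : ∀ w, w < N + 2 → 0 ≤ d w := fun w hw =>
    hdy.trans (hmin w (Finset.mem_range.mpr hw))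
  have hleft := hnonneg (x - 1) (by omega)
  have hright := hnonneg (x + 2) (by omega)
  nlinarith [hmean x hx₀ hxN]

theorem stmt9_general (N : ℕ) (hN : 2 ≤ N) (h : ℕ → ℝ)
    (h0 : h 0 = 0) (hNv : h N = 1) (hN1 : h (N + 1) = 1)
    (hrec : ∀ x, 0 < x → x < N → h x = 3 / 4 * h (x - 1) + 1 / 4 * h (x + 2)) :
    (∀ x, 0 < x → x < N → h x < (x : ℝ) / N) ∧ h (N / 2) < 1 / 2 := by
  have hN₀ : (0 : ℝ) < N := by norm_cast; omega
  set d : ℕ → ℝ := fun x => (x : ℝ) / N - h x with hd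
  have hmean : ∀ x, 0 < x → x < N → 3 / 4 * d (x - 1) + (1 - 3 / 4) * d (x + 2) < d x := by
    intro x hx₀ hxN
    have hgap : d x = 3 / 4 * d (x - 1) + (1 - 3 / 4) * d (x + 2) + 1 / (4 * N) := by
      simp only [hd, hrec x hx₀ hxN, Nat.cast_sub (show 1 ≤ x by omega)]
      push_cast
      field_simp
      ring
    have : (0 : ℝ) < 1 / (4 * N) := by positivity
    linarith
  have hlt : ∀ x, 0 < x → x < N → h x < (x : ℝ) / N := by
    intro x hx₀ hxN
    have := pos_of_lt_weighted_mean (by norm_num) (by norm_num)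
      (by simp [hd, h0]) (by simp [hd, hNv, hN₀.ne']) (by simp [hd, hN1]; rw [le_div_iff₀ hN₀]; simp)
      hmean hx₀ hxN
    simp only [hd] at this
    linarith
  refine ⟨hlt, (hlt (N / 2) (by omega) (by omega)).trans_le ?_⟩
  rw [div_le_iff₀ hN₀]
  have : ((N / 2 : ℕ) : ℝ) * 2 ≤ N := by exact_mod_cast Nat.div_mul_le_self N 2
  linarith

/-- In the simplified coin-game Markov chain on {0,…,N+1} (N ≥ 2 even), moving from
    each 0 < x < N to x−1 with probability 3/4 and to x+2 with probability 1/4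
    (0, N, N+1 absorbing), the probability h x of reaching {N, N+1}—the least
    nonnegative solution of the fixed-point equations—satisfies h x < x/N for all
    0 < x < N; in particular the game starting at N/2 is unfair: h (N/2) < 1/2. -/
theorem stmt9 (N : ℕ) (hN : 2 ≤ N) (heven : Even N) (h : ℕ → ℝ)
    (hnonneg : ∀ x, 0 ≤ h x)
    (h0 : h 0 = 0) (hNv : h N = 1) (hN1 : h (N + 1) = 1)
    (hrec : ∀ x, 0 < x → x < N → h x = 3 / 4 * h (x - 1) + 1 / 4 * h (x + 2))
    (hleast : ∀ g : ℕ → ℝ, (∀ x, 0 ≤ g x) → g 0 = 0 → g N = 1 → g (N + 1) = 1 →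
      (∀ x, 0 < x → x < N → g x = 3 / 4 * g (x - 1) + 1 / 4 * g (x + 2)) →
      ∀ x, x ≤ N + 1 → h x ≤ g x) :
    (∀ x, 0 < x → x < N → h x < (x : ℝ) / N) ∧ h (N / 2) < 1 / 2 :=
  stmt9_general N hN h h0 hNv hN1 hrec
end
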